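/- arXiv:2003.11129 — 5 statements merged into one kernel-verified Lean document; each statement's English description precedes it below -/
import Mathlib

section
/- Let p be a prime, let X and Y be profinite sets, and let R be a p-adically complete ℤ_p-algebra. For every ℤ_p-bilinear pairing B : C(X, ℤ_p) × C(Y, ℤ_p) → R there exists a unique R-valued measure μ on X × Y (i.e. a unique ℤ_p-linear map μ : C(X × Y, ℤ_p) → R) such that for all continuous f : X → ℤ_p and g : Y → ℤ_p one has μ((x,y) ↦ f(x)·g(y)) = B(f, g). -/
/-!
Reducing a continuous function on `X × Y` modulo `p ^ n` gives a locally constant function,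
whose fibres are clopen, and a clopen subset of a product of compact spaces is a finite union of
clopen boxes `U ×ˢ V`. Hence the sums `∑ fᵢ(x) gᵢ(y)` are `p`-adically dense in
`C(X × Y, ℤ_p)`. On them `B` is `p`-adically continuous: if `∑ fᵢ(x) gᵢ(y) ≡ 0 mod p ^ n`,
replace each `fᵢ` modulo `p ^ n` by a step function `∑ₖ fᵢ(xₖ) 1_{Uₖ}`; then
`∑ B(fᵢ, gᵢ) ≡ ∑ₖ B(1_{Uₖ}, ∑ᵢ fᵢ(xₖ) gᵢ)`, and every second argument is `≡ 0 mod p ^ n`.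
A `p`-adically continuous linear map on a `p`-adically dense image extends uniquely to a
`p`-adically complete target.
-/

open TopologicalSpace TensorProduct

section AdicExtension

variable {S T M N : Type*} [CommRing S] [AddCommGroup T] [Module S T]
  [AddCommGroup M] [Module S M] [AddCommGroup N] [Module S N]

theorem Submodule.exists_linearMap_quotient_eq_mk {P : Submodule S M} {Q : Submodule S N}
    (Φ : T →ₗ[S] M) (β : T →ₗ[S] N) (hΦ : ∀ x, ∃ t, x - Φ t ∈ P)
    (hβ : ∀ t, Φ t ∈ P → β t ∈ Q) :
    ∃ F : M →ₗ[S] N ⧸ Q, ∀ x t, x - Φ t ∈ P → F x = Q.mkQ (β t) := by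
  set g := P.mkQ ∘ₗ Φ
  have hg : Function.Surjective g := fun x => by
    obtain ⟨x, rfl⟩ := P.mkQ_surjective x
    obtain ⟨t, ht⟩ := hΦ x
    exact ⟨t, ((Submodule.Quotient.eq P).mpr ht).symm⟩
  have hker : LinearMap.ker g ≤ LinearMap.ker (Q.mkQ ∘ₗ β) := fun t ht => by
    simpa using hβ t (by simpa [g] using ht)
  refine ⟨(LinearMap.ker g).liftQ _ hker ∘ₗ (g.quotKerEquivOfSurjective hg).symm.toLinearMap ∘ₗ
    P.mkQ, fun x t hxt => ?_⟩
  have : P.mkQ x = g t := (Submodule.Quotient.eq P).mpr hxt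
  simp [this, LinearMap.quotKerEquivOfSurjective_symm_apply]

theorem IsAdicComplete.existsUnique_comp_eq (I : Ideal S) [IsAdicComplete I N]
    (Φ : T →ₗ[S] M) (β : T →ₗ[S] N)
    (hΦ : ∀ n x, ∃ t, x - Φ t ∈ I ^ n • (⊤ : Submodule S M))
    (hβ : ∀ n t, Φ t ∈ I ^ n • (⊤ : Submodule S M) → β t ∈ I ^ n • (⊤ : Submodule S N)) :
    ∃! μ : M →ₗ[S] N, μ ∘ₗ Φ = β := by
  choose F hF using fun n => Submodule.exists_linearMap_quotient_eq_mk Φ β (hΦ n) (hβ n)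
  have hcompat {m n : ℕ} (hle : m ≤ n) : Submodule.factorPow I N hle ∘ₗ F n = F m := by
    ext x
    obtain ⟨t, ht⟩ := hΦ n x
    simp [hF n x t ht, hF m x t (Submodule.pow_smul_top_le I M hle ht)]
  refine ⟨IsAdicComplete.lift I F hcompat, ?_, fun μ hμ => IsAdicComplete.eq_lift I hcompat ?_⟩
  · ext t
    refine IsHausdorff.eq_iff_smodEq (I := I) |>.mpr fun n => ?_
    rw [SModEq, LinearMap.comp_apply, IsAdicComplete.mk_lift, hF n _ t (by simp)]
    rfl
  · intro n
    ext x
    obtain ⟨t, ht⟩ := hΦ n x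
    rw [LinearMap.comp_apply, hF n x t ht, ← hμ, Submodule.mkQ_apply, Submodule.mkQ_apply,
      Submodule.Quotient.eq, LinearMap.comp_apply, ← map_sub]
    exact Submodule.smul_top_le_comap_smul_top _ μ ht

end AdicExtension

namespace TopologicalSpace.Clopens

variable {Z : Type*} [TopologicalSpace Z] (R : Type*) [Ring R] [TopologicalSpace R]

noncomputable def charFn (U : Clopens Z) : C(Z, R) := LocallyConstant.charFn R U.isClopen

variable {R}

open scoped Classical in
theorem charFn_apply (U : Clopens Z) (z : Z) : charFn R U z = if z ∈ U then 1 else 0 :=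
  Set.indicator_apply _ _ _

@[simp]
theorem charFn_bot : charFn R (⊥ : Clopens Z) = 0 := by
  ext z
  simp [charFn_apply, ← SetLike.mem_coe]

variable [IsTopologicalRing R]

theorem charFn_sup (U V : Clopens Z) :
    charFn R (U ⊔ V) = charFn R U + charFn R V - charFn R U * charFn R V := by
  ext z
  have : z ∈ U ⊔ V ↔ z ∈ U ∨ z ∈ V := Iff.rfl
  by_cases hU : z ∈ U <;> by_cases hV : z ∈ V <;> simp [charFn_apply, this, hU, hV]

theorem charFn_prod {X Y : Type*} [TopologicalSpace X] [TopologicalSpace Y]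
    (U : Clopens X) (V : Clopens Y) :
    charFn R (U ×ˢ V) =
      (charFn R U).comp ContinuousMap.fst * (charFn R V).comp ContinuousMap.snd := by
  ext z
  by_cases hU : z.1 ∈ U <;> by_cases hV : z.2 ∈ V <;> simp [charFn_apply, hU, hV]

end TopologicalSpace.Clopens

theorem PadicInt.continuous_toZModPow {p : ℕ} [Fact p.Prime] (n : ℕ) :
    Continuous (toZModPow n : ℤ_[p] → ZMod (p ^ n)) := by
  refine continuous_of_continuousAt_zero (toZModPow n) ?_
  rw [ContinuousAt, nhds_discrete (ZMod (p ^ n)), Filter.tendsto_pure, map_zero]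
  filter_upwards [Metric.closedBall_mem_nhds (0 : ℤ_[p])
    (zpow_pos (Nat.cast_pos.mpr (Fact.out : p.Prime).pos) (-n : ℤ))] with x hx
  rw [← RingHom.mem_ker, ker_toZModPow, ← norm_le_pow_iff_mem_span_pow]
  simpa using hx

namespace ContinuousMap

section

variable (R X Y : Type*) [CommRing R] [TopologicalSpace R] [IsTopologicalRing R]
  [TopologicalSpace X] [TopologicalSpace Y]

noncomputable def tensorToProd : C(X, R) ⊗[R] C(Y, R) →ₐ[R] C(X × Y, R) :=
  Algebra.TensorProduct.productMap (compRightAlgHom R R fst) (compRightAlgHom R R snd)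

variable {R X Y}

@[simp]
theorem tensorToProd_tmul (f : C(X, R)) (g : C(Y, R)) :
    tensorToProd R X Y (f ⊗ₜ g) = f.comp fst * g.comp snd := rfl

theorem charFn_mem_range_tensorToProd [CompactSpace X] [CompactSpace Y]
    (W : Clopens (X × Y)) : W.charFn R ∈ (tensorToProd R X Y).range := by
  obtain ⟨I, rfl⟩ := W.exists_finset_eq_sup_prod
  refine Finset.sup_induction
    (p := fun W : Clopens (X × Y) => W.charFn R ∈ (tensorToProd R X Y).range)
    (by simp) (fun U hU V hV => ?_) (fun b _ => ⟨b.1.charFn R ⊗ₜ b.2.charFn R, ?_⟩)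
  · rw [Clopens.charFn_sup]
    exact sub_mem (add_mem hU hV) (mul_mem hU hV)
  · exact (tensorToProd_tmul _ _).trans (Clopens.charFn_prod _ _).symm

end

variable {p : ℕ} [Fact p.Prime]

section

variable {Z : Type*} [TopologicalSpace Z]

theorem exists_eq_pow_smul_of_forall_mem {n : ℕ} (h : C(Z, ℤ_[p]))
    (hh : ∀ z, h z ∈ Ideal.span {(p : ℤ_[p])} ^ n) :
    ∃ c : C(Z, ℤ_[p]), h = (p : ℤ_[p]) ^ n • c := by
  have hp : (0 : ℝ) < p := Nat.cast_pos.mpr (Fact.out : p.Prime).pos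
  have hle (z : Z) : ‖(h z : ℚ_[p]) / (p : ℚ_[p]) ^ n‖ ≤ 1 := by
    rw [norm_div, Padic.norm_p_pow, div_le_one (zpow_pos hp _)]
    exact (PadicInt.norm_le_pow_iff_mem_span_pow (h z) n).mpr
      (by simpa [Ideal.span_singleton_pow] using hh z)
  refine ⟨⟨fun z => ⟨(h z : ℚ_[p]) / (p : ℚ_[p]) ^ n, hle z⟩,
    ((continuous_subtype_val.comp h.continuous).div_const _).subtype_mk _⟩, ?_⟩
  ext z : 1
  apply Subtype.ext
  change (h z : ℚ_[p]) = (p : ℚ_[p]) ^ n * ((h z : ℚ_[p]) / (p : ℚ_[p]) ^ n)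
  rw [mul_div_cancel₀ _ (pow_ne_zero n (by exact_mod_cast hp.ne'))]

theorem mem_pow_smul_top_iff {n : ℕ} {h : C(Z, ℤ_[p])} :
    h ∈ Ideal.span {(p : ℤ_[p])} ^ n • (⊤ : Submodule ℤ_[p] C(Z, ℤ_[p])) ↔
      ∀ z, h z ∈ Ideal.span {(p : ℤ_[p])} ^ n := by
  refine ⟨fun hh z => ?_, fun hh => ?_⟩
  · refine Submodule.smul_induction_on hh (fun r hr f _ => ?_) (fun f g hf hg => ?_)
    · exact Ideal.mul_mem_right _ _ hr
    · exact Ideal.add_mem _ hf hg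
  · obtain ⟨c, rfl⟩ := exists_eq_pow_smul_of_forall_mem h hh
    exact Submodule.smul_mem_smul (Ideal.pow_mem_pow (Ideal.mem_span_singleton_self _) n) trivial

theorem exists_sub_sum_smul_charFn_mem (F : Finset C(Z, ℤ_[p])) (n : ℕ) :
    ∃ (s : Finset Z) (U : Z → Clopens Z), ∀ f ∈ F, f - ∑ z ∈ s, f z • (U z).charFn ℤ_[p] ∈
      Ideal.span {(p : ℤ_[p])} ^ n • (⊤ : Submodule ℤ_[p] C(Z, ℤ_[p])) := by
  classical
  let r : Z → F → ZMod (p ^ n) := fun z f => PadicInt.toZModPow n (f.1 z)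
  have hr : Continuous r :=
    continuous_pi fun f => (PadicInt.continuous_toZModPow n).comp f.1.continuous
  let U (z : Z) : Clopens Z := ⟨r ⁻¹' {r z}, (isClopen_discrete _).preimage hr⟩
  let σ := Set.rangeSplitting r
  have : Fintype (Set.range r) := Fintype.ofFinite _
  refine ⟨Finset.univ.image σ, U, fun f hf => mem_pow_smul_top_iff.mpr fun z => ?_⟩
  have hsum : (∑ w ∈ Finset.univ.image σ, f w • (U w).charFn ℤ_[p]) z =
      f (σ ⟨r z, z, rfl⟩) := by
    rw [Finset.sum_image fun v _ w _ h => Set.rangeSplitting_injective r h]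
    simp only [coe_sum, coe_smul, Finset.sum_apply, Pi.smul_apply, Clopens.charFn_apply, U,
      Clopens.mem_mk, Set.mem_preimage, Set.mem_singleton_iff, Set.apply_rangeSplitting r,
      smul_eq_mul, mul_ite, mul_one, mul_zero]
    rw [Finset.sum_eq_single ⟨r z, z, rfl⟩
      (fun v _ hv => if_neg fun h => hv (Subtype.ext h.symm)) (by simp), if_pos rfl]
  rw [sub_apply, hsum, Ideal.span_singleton_pow, ← PadicInt.ker_toZModPow, RingHom.mem_ker,
    map_sub, sub_eq_zero]
  exact (congrFun (Set.apply_rangeSplitting r ⟨r z, z, rfl⟩) ⟨f, hf⟩).symm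

end

variable {X Y : Type*} [TopologicalSpace X] [TopologicalSpace Y]

theorem exists_sub_tensorToProd_mem [CompactSpace X] [CompactSpace Y] (n : ℕ)
    (h : C(X × Y, ℤ_[p])) : ∃ t, h - tensorToProd ℤ_[p] X Y t ∈
      Ideal.span {(p : ℤ_[p])} ^ n • (⊤ : Submodule ℤ_[p] C(X × Y, ℤ_[p])) := by
  obtain ⟨s, U, hU⟩ := exists_sub_sum_smul_charFn_mem {h} n
  obtain ⟨t, ht⟩ : ∑ z ∈ s, h z • (U z).charFn ℤ_[p] ∈ (tensorToProd ℤ_[p] X Y).range :=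
    Subalgebra.sum_mem _ fun z _ => Subalgebra.smul_mem _ (charFn_mem_range_tensorToProd _) _
  exact ⟨t, ht ▸ hU h (Finset.mem_singleton_self h)⟩

theorem lift_mem_pow_smul_top_of_tensorToProd_mem {N : Type*} [AddCommGroup N]
    [Module ℤ_[p] N] (B : C(X, ℤ_[p]) →ₗ[ℤ_[p]] C(Y, ℤ_[p]) →ₗ[ℤ_[p]] N) {n : ℕ}
    {t : C(X, ℤ_[p]) ⊗[ℤ_[p]] C(Y, ℤ_[p])}
    (ht : tensorToProd ℤ_[p] X Y t ∈
      Ideal.span {(p : ℤ_[p])} ^ n • (⊤ : Submodule ℤ_[p] C(X × Y, ℤ_[p]))) :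
    TensorProduct.lift B t ∈ Ideal.span {(p : ℤ_[p])} ^ n • (⊤ : Submodule ℤ_[p] N) := by
  classical
  obtain ⟨S, rfl⟩ := TensorProduct.exists_finset t
  obtain ⟨s, U, hU⟩ := exists_sub_sum_smul_charFn_mem (S.image Prod.fst) n
  let step (f : C(X, ℤ_[p])) : C(X, ℤ_[p]) := ∑ x ∈ s, f x • (U x).charFn ℤ_[p]
  have hsplit : TensorProduct.lift B (∑ q ∈ S, q.1 ⊗ₜ q.2) =
      ∑ q ∈ S, B (q.1 - step q.1) q.2 + ∑ x ∈ s, B ((U x).charFn ℤ_[p]) (∑ q ∈ S, q.1 x • q.2) := by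
    simp [step, map_sum, Finset.sum_comm (s := S)]
  rw [hsplit]
  refine add_mem (Submodule.sum_mem _ fun q hq => ?_) (Submodule.sum_mem _ fun x _ => ?_)
  · exact Submodule.smul_top_le_comap_smul_top _ (B.flip q.2)
      (hU q.1 (Finset.mem_image_of_mem _ hq))
  · -- `∑ q ∈ S, q.1 x • q.2` is the slice `y ↦ (tensorToProd t) (x, y)`
    refine Submodule.smul_top_le_comap_smul_top _ (B _) (mem_pow_smul_top_iff.mpr fun y => ?_)
    simpa [map_sum] using mem_pow_smul_top_iff.mp ht (x, y)

end ContinuousMap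

theorem bilinear_form_to_measure_general
    (p : ℕ) [Fact p.Prime]
    (X Y : Type*) [TopologicalSpace X] [CompactSpace X]
    [TopologicalSpace Y] [CompactSpace Y]
    (R : Type*) [CommRing R] [Algebra ℤ_[p] R]
    [IsAdicComplete (Ideal.span {(p : R)}) R]
    (B : C(X, ℤ_[p]) →ₗ[ℤ_[p]] C(Y, ℤ_[p]) →ₗ[ℤ_[p]] R) :
    ∃! μ : C(X × Y, ℤ_[p]) →ₗ[ℤ_[p]] R,
      ∀ (f : C(X, ℤ_[p])) (g : C(Y, ℤ_[p])),
        μ (f.comp ContinuousMap.fst * g.comp ContinuousMap.snd) = B f g := by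
  have : IsAdicComplete (Ideal.span {(p : ℤ_[p])}) R := by
    rw [← IsAdicComplete.map_algebraMap_iff (S := R), Ideal.map_span, Set.image_singleton,
      map_natCast]
    infer_instance
  refine (existsUnique_congr fun μ => ?_).mp <|
    IsAdicComplete.existsUnique_comp_eq _ (ContinuousMap.tensorToProd ℤ_[p] X Y).toLinearMap
      (TensorProduct.lift B) ContinuousMap.exists_sub_tensorToProd_mem
      fun _ _ => ContinuousMap.lift_mem_pow_smul_top_of_tensorToProd_mem B
  exact ⟨fun h f g => by simpa using LinearMap.congr_fun h (f ⊗ₜ g),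
    fun h => TensorProduct.ext' fun f g => by simpa using h f g⟩

/-- Let `p` be a prime, `X` and `Y` profinite sets, and `R` a
`p`-adically complete `ℤ_p`-algebra.  For every `ℤ_p`-bilinear pairing
`B : C(X, ℤ_p) × C(Y, ℤ_p) → R` there is a unique `R`-valued measure `μ` on `X × Y`
(i.e. a unique `ℤ_p`-linear map `μ : C(X × Y, ℤ_p) → R`) such that
`μ ((x,y) ↦ f x * g y) = B f g` for all continuous `f : X → ℤ_p`, `g : Y → ℤ_p`. -/
theorem bilinear_form_to_measure
    (p : ℕ) [Fact p.Prime]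
    (X Y : Type*) [TopologicalSpace X] [CompactSpace X] [T2Space X]
    [TotallyDisconnectedSpace X]
    [TopologicalSpace Y] [CompactSpace Y] [T2Space Y] [TotallyDisconnectedSpace Y]
    (R : Type*) [CommRing R] [Algebra ℤ_[p] R]
    [IsAdicComplete (Ideal.span {(p : R)}) R]
    (B : C(X, ℤ_[p]) →ₗ[ℤ_[p]] C(Y, ℤ_[p]) →ₗ[ℤ_[p]] R) :
    ∃! μ : C(X × Y, ℤ_[p]) →ₗ[ℤ_[p]] R,
      ∀ (f : C(X, ℤ_[p])) (g : C(Y, ℤ_[p])),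
        μ (f.comp ContinuousMap.fst * g.comp ContinuousMap.snd) = B f g :=
  bilinear_form_to_measure_general p X Y R B
end

section
/- Let p be a prime and let X and Y be profinite sets. The ℤ_p-linear map LC(X, ℤ_p) ⊗_{ℤ_p} LC(Y, ℤ_p) → LC(X × Y, ℤ_p) induced by sending f ⊗ g to the function (x,y) ↦ f(x)·g(y) is an isomorphism of ℤ_p-modules. -/
open scoped TensorProduct

open scoped Classical

section Aux

variable {R : Type*} [CommRing R]

lemma LC.sum_apply' {Z : Type*} [TopologicalSpace Z] {ι : Type*} (s : Finset ι)
    (f : ι → LocallyConstant Z R) (x : Z) :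
    (∑ i ∈ s, f i) x = ∑ i ∈ s, f i x :=
  map_sum (LocallyConstant.evalₗ R x) f s

/-- The `R`-valued indicator of a fiber of a discrete quotient. -/
noncomputable def dqIndicator {Z : Type*} [TopologicalSpace Z] (Q : DiscreteQuotient Z) (q : Q)
    (R : Type*) [CommRing R] : LocallyConstant Z R :=
  ⟨(fun q' => if q' = q then (1 : R) else 0) ∘ Q.proj, Q.proj_isLocallyConstant.comp _⟩

lemma dqIndicator_apply {Z : Type*} [TopologicalSpace Z] (Q : DiscreteQuotient Z) (q : Q)
    (x : Z) : dqIndicator Q q R x = if Q.proj x = q then 1 else 0 := rfl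

lemma lc_eq_sum_dqIndicator {Z : Type*} [TopologicalSpace Z]
    (Q : DiscreteQuotient Z) [Fintype Q] (f : LocallyConstant Z R)
    (hf : ∀ x y, Q.proj x = Q.proj y → f x = f y) :
    f = ∑ q : Q, f q.out • dqIndicator Q q R := by
  ext x
  rw [LC.sum_apply']
  have : ∀ q : Q, (f q.out • dqIndicator Q q R) x = if Q.proj x = q then f q.out else 0 := by
    intro q
    simp [dqIndicator_apply, smul_eq_mul]
  simp only [this]
  rw [Finset.sum_ite_eq Finset.univ (Q.proj x)]
  simp only [Finset.mem_univ, if_true]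
  exact (hf _ _ (Quotient.out_eq' (Q.proj x))).symm

end Aux


/-- The `ℤ_p`-bilinear map sending locally constant functions `f : X → ℤ_p` and
`g : Y → ℤ_p` to the locally constant function `(x, y) ↦ f x * g y` on `X × Y`. -/
noncomputable def locallyConstantProdBilinear
    (p : ℕ) [Fact p.Prime]
    (X Y : Type*) [TopologicalSpace X] [TopologicalSpace Y] :
    LocallyConstant X ℤ_[p] →ₗ[ℤ_[p]]
      LocallyConstant Y ℤ_[p] →ₗ[ℤ_[p]] LocallyConstant (X × Y) ℤ_[p] :=
  LinearMap.mk₂ ℤ_[p]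
    (fun f g =>
      ⟨fun xy => f xy.1 * g xy.2,
        (f.isLocallyConstant.comp_continuous continuous_fst).mul
          (g.isLocallyConstant.comp_continuous continuous_snd)⟩)
    (by intro f f' g; ext xy; simp [add_mul])
    (by intro c f g; ext xy; simp [mul_assoc])
    (by intro f g g'; ext xy; simp [mul_add])
    (by intro c f g; ext xy; simp; ring)

lemma lCPB_apply (p : ℕ) [Fact p.Prime]
    (X Y : Type*) [TopologicalSpace X] [TopologicalSpace Y]
    (f : LocallyConstant X ℤ_[p]) (g : LocallyConstant Y ℤ_[p]) (z : X × Y) :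
    locallyConstantProdBilinear p X Y f g z = f z.1 * g z.2 := rfl

/-- Let `p` be a prime and `X`, `Y` profinite sets.  The
`ℤ_p`-linear map `LC(X, ℤ_p) ⊗_{ℤ_p} LC(Y, ℤ_p) → LC(X × Y, ℤ_p)` induced by
`f ⊗ g ↦ ((x,y) ↦ f x * g y)` is an isomorphism of `ℤ_p`-modules. -/
theorem locallyConstant_tensor_product_bijective
    (p : ℕ) [Fact p.Prime]
    (X Y : Type*) [TopologicalSpace X] [CompactSpace X] [T2Space X]
    [TotallyDisconnectedSpace X]
    [TopologicalSpace Y] [CompactSpace Y] [T2Space Y] [TotallyDisconnectedSpace Y] :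
    Function.Bijective
      (TensorProduct.lift (locallyConstantProdBilinear p X Y) :
        LocallyConstant X ℤ_[p] ⊗[ℤ_[p]] LocallyConstant Y ℤ_[p] →ₗ[ℤ_[p]]
          LocallyConstant (X × Y) ℤ_[p]) := by
  set Φ : LocallyConstant X ℤ_[p] ⊗[ℤ_[p]] LocallyConstant Y ℤ_[p] →ₗ[ℤ_[p]]
      LocallyConstant (X × Y) ℤ_[p] :=
    TensorProduct.lift (locallyConstantProdBilinear p X Y) with hΦ
  have Φtmul : ∀ (f : LocallyConstant X ℤ_[p]) (g : LocallyConstant Y ℤ_[p]) (z : X × Y),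
      Φ (f ⊗ₜ g) z = f z.1 * g z.2 := by
    intro f g z
    rw [hΦ, TensorProduct.lift.tmul, lCPB_apply]
  constructor
  · -- injectivity
    rw [injective_iff_map_eq_zero]
    intro t ht
    obtain ⟨S, rfl⟩ := TensorProduct.exists_finset t
    set Qx : DiscreteQuotient X := S.inf fun fg => fg.1.discreteQuotient with hQxdef
    set Qy : DiscreteQuotient Y := S.inf fun fg => fg.2.discreteQuotient with hQydef
    haveI : Fintype Qx := Fintype.ofFinite _
    haveI : Fintype Qy := Fintype.ofFinite _
    have hfx : ∀ fg ∈ S, ∀ x y : X, Qx.proj x = Qx.proj y → fg.1 x = fg.1 y := by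
      intro fg hfg x y h
      have hle : Qx ≤ fg.1.discreteQuotient := Finset.inf_le hfg
      have h2 := congrArg (DiscreteQuotient.ofLE hle) h
      rw [DiscreteQuotient.ofLE_proj, DiscreteQuotient.ofLE_proj] at h2
      exact congrArg fg.1.lift h2
    have hfy : ∀ fg ∈ S, ∀ x y : Y, Qy.proj x = Qy.proj y → fg.2 x = fg.2 y := by
      intro fg hfg x y h
      have hle : Qy ≤ fg.2.discreteQuotient := Finset.inf_le hfg
      have h2 := congrArg (DiscreteQuotient.ofLE hle) h
      rw [DiscreteQuotient.ofLE_proj, DiscreteQuotient.ofLE_proj] at h2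
      exact congrArg fg.2.lift h2
    have hev : ∀ (x : X) (y : Y), ∑ fg ∈ S, fg.1 x * fg.2 y = 0 := by
      intro x y
      have h1 := congrArg (LocallyConstant.evalₗ ℤ_[p] (x, y)) ht
      rw [map_sum, map_zero] at h1
      simpa [LocallyConstant.evalₗ_apply, Φtmul] using h1
    calc ∑ fg ∈ S, fg.1 ⊗ₜ[ℤ_[p]] fg.2
        = ∑ fg ∈ S, (∑ q : Qx, fg.1 q.out • dqIndicator Qx q ℤ_[p]) ⊗ₜ[ℤ_[p]]
            (∑ q' : Qy, fg.2 q'.out • dqIndicator Qy q' ℤ_[p]) := by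
          refine Finset.sum_congr rfl fun fg hfg => ?_
          rw [← lc_eq_sum_dqIndicator Qx fg.1 (hfx fg hfg),
            ← lc_eq_sum_dqIndicator Qy fg.2 (hfy fg hfg)]
      _ = ∑ q' : Qy, ∑ fg ∈ S, ∑ q : Qx,
            ((fg.2 q'.out * fg.1 q.out) • dqIndicator Qx q ℤ_[p]) ⊗ₜ[ℤ_[p]]
              dqIndicator Qy q' ℤ_[p] := by
          simp only [TensorProduct.sum_tmul, TensorProduct.tmul_sum,
            TensorProduct.smul_tmul', TensorProduct.tmul_smul, Finset.smul_sum, smul_smul]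
          exact Finset.sum_comm
      _ = ∑ q' : Qy, ∑ q : Qx, ∑ fg ∈ S,
            ((fg.2 q'.out * fg.1 q.out) • dqIndicator Qx q ℤ_[p]) ⊗ₜ[ℤ_[p]]
              dqIndicator Qy q' ℤ_[p] :=
          Finset.sum_congr rfl fun q' _ => Finset.sum_comm
      _ = 0 := by
          refine Finset.sum_eq_zero fun q' _ => Finset.sum_eq_zero fun q _ => ?_
          rw [← TensorProduct.sum_tmul, ← Finset.sum_smul]
          have h0 : ∑ fg ∈ S, fg.2 q'.out * fg.1 q.out = 0 := by
            rw [show ∑ fg ∈ S, fg.2 q'.out * fg.1 q.out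
                = ∑ fg ∈ S, fg.1 q.out * fg.2 q'.out from
              Finset.sum_congr rfl fun fg _ => mul_comm _ _]
            exact hev q.out q'.out
          rw [h0, zero_smul, TensorProduct.zero_tmul]
  · -- surjectivity
    intro F
    have hmul : ∀ u v, Φ u * Φ v ∈ LinearMap.range Φ := by
      intro u v
      induction u using TensorProduct.induction_on with
      | zero => simp
      | tmul f g =>
        induction v using TensorProduct.induction_on with
        | zero => simp
        | tmul f' g' =>
          refine ⟨(f * f') ⊗ₜ (g * g'), ?_⟩
          ext z
          simp [Φtmul, LocallyConstant.coe_mul]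
          ring
        | add v₁ v₂ h₁ h₂ =>
          rw [map_add, mul_add]
          exact add_mem h₁ h₂
      | add u₁ u₂ h₁ h₂ =>
        rw [map_add, add_mul]
        exact add_mem h₁ h₂
    -- predicate: A is "good" if its indicator is in the range
    set P : Set (X × Y) → Prop := fun A =>
      ∃ G ∈ LinearMap.range Φ, ∀ z, G z = if z ∈ A then (1 : ℤ_[p]) else 0 with hP
    have hPbox : ∀ (U : Set X) (V : Set Y), IsClopen U → IsClopen V → P (U ×ˢ V) := by
      intro U V hU hV
      refine ⟨Φ (LocallyConstant.charFn ℤ_[p] hU ⊗ₜ LocallyConstant.charFn ℤ_[p] hV),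
        ⟨_, rfl⟩, fun z => ?_⟩
      rw [Φtmul]
      simp only [LocallyConstant.coe_charFn, Set.indicator_apply, Set.mem_prod, Pi.one_apply]
      by_cases h1 : z.1 ∈ U <;> by_cases h2 : z.2 ∈ V <;> simp [h1, h2]
    have hPunion : ∀ A B, P A → P B → P (A ∪ B) := by
      rintro A B ⟨GA, hGA, hvA⟩ ⟨GB, hGB, hvB⟩
      refine ⟨GA + GB - GA * GB, ?_, fun z => ?_⟩
      · obtain ⟨u, rfl⟩ := hGA
        obtain ⟨v, rfl⟩ := hGB
        exact sub_mem (add_mem (LinearMap.mem_range_self _ u) (LinearMap.mem_range_self _ v))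
          (hmul u v)
      · simp only [LocallyConstant.coe_sub, LocallyConstant.coe_add, LocallyConstant.coe_mul,
          Pi.sub_apply, Pi.add_apply, Pi.mul_apply, hvA z, hvB z, Set.mem_union]
        by_cases h1 : z ∈ A <;> by_cases h2 : z ∈ B <;> simp [h1, h2]
    have hPclopen : ∀ A : Set (X × Y), IsClopen A → P A := by
      intro A hA
      have hcover : ∀ s ∈ A, ∃ U : Set X, ∃ V : Set Y,
          IsClopen U ∧ IsClopen V ∧ s ∈ U ×ˢ V ∧ U ×ˢ V ⊆ A := by
        intro s hs
        obtain ⟨U', V', hU', hV', hsU, hsV, hUV⟩ :=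
          isOpen_prod_iff.1 hA.2 s.1 s.2 (by simpa using hs)
        obtain ⟨U, hU, hsU2, hUsub⟩ := compact_exists_isClopen_in_isOpen hU' hsU
        obtain ⟨V, hV, hsV2, hVsub⟩ := compact_exists_isClopen_in_isOpen hV' hsV
        exact ⟨U, V, hU, hV, ⟨hsU2, hsV2⟩, (Set.prod_mono hUsub hVsub).trans hUV⟩
      choose U V hU hV hmem hsub using hcover
      have hcomp : IsCompact A := hA.isClosed.isCompact
      obtain ⟨t, ht⟩ := hcomp.elim_finite_subcover
        (fun s : A => U s s.2 ×ˢ V s s.2)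
        (fun s => ((hU s s.2).prod (hV s s.2)).2)
        (fun z hz => Set.mem_iUnion.2 ⟨⟨z, hz⟩, hmem z hz⟩)
      have hAeq : A = ⋃ s ∈ t, U s s.2 ×ˢ V s s.2 := by
        apply Set.Subset.antisymm ht
        intro z hz
        simp only [Set.mem_iUnion] at hz
        obtain ⟨s, _, hzs⟩ := hz
        exact hsub s s.2 hzs
      have hun : ∀ t' : Finset A, P (⋃ s ∈ t', U s s.2 ×ˢ V s s.2) := by
        intro t'
        induction t' using Finset.induction_on with
        | empty => exact ⟨0, zero_mem _, fun z => by simp⟩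
        | @insert a t'' hat ih =>
          rw [Finset.set_biUnion_insert]
          exact hPunion _ _ (hPbox _ _ (hU a a.2) (hV a a.2)) ih
      rw [hAeq]
      exact hun t
    -- decompose F into fibers
    have hfib : ∀ c : ℤ_[p], ∃ G ∈ LinearMap.range Φ,
        ∀ z, G z = if F z = c then c else 0 := by
      intro c
      obtain ⟨G, hG, hGv⟩ := hPclopen {z | F z = c} (F.isLocallyConstant.isClopen_fiber c)
      refine ⟨c • G, Submodule.smul_mem _ c hG, fun z => ?_⟩
      have : (c • G) z = c * G z := rfl
      rw [this, hGv z]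
      by_cases h : F z = c <;> simp [h]
    choose G hGmem hGval using hfib
    have hFr := F.range_finite
    have hFeq : F = ∑ c ∈ hFr.toFinset, G c := by
      ext z
      rw [LC.sum_apply']
      rw [Finset.sum_eq_single_of_mem (F z)
        (hFr.mem_toFinset.2 ⟨z, rfl⟩)]
      · rw [hGval]
        simp
      · intro c hc hne
        rw [hGval]
        simp [Ne.symm hne]
    have : F ∈ LinearMap.range Φ := by
      rw [hFeq]
      exact sum_mem fun c _ => hGmem c
    exact this
end

section
/- Let p be a prime, let X be a profinite set, and let R be a p-adically complete ℤ_p-algebra. Then restriction along the inclusion of locally constant functions into continuous functions gives a bijection from the set of ℤ_p-linear maps C(X, ℤ_p) → R onto the set of ℤ_p-linear maps LC(X, ℤ_p) → R; that is, every R-valued distribution on X (ℤ_p-linear functional on locally constant functions) extends uniquely to an R-valued measure on X. -/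
/-!
If `ι : N → M` induces isomorphisms `N ⧸ Iⁿ N ≃ M ⧸ Iⁿ M` for all `n`, then every linear map
`ν : N → Q` into an `I`-adically complete module gives compatible maps `M → Q ⧸ Iⁿ Q`, which glue
to the unique `μ : M → Q` with `μ ∘ ι = ν`.

For the inclusion of locally constant into continuous `ℤ_p`-valued functions and `I = (p)` this
holds: truncating the values of `f` modulo `pⁿ` gives a locally constant `g` with
`f - g ∈ pⁿ C(X, ℤ_p)` (dividing by `pⁿ` keeps continuity, as multiplication by `pⁿ` is an
embedding), and a locally constant function lying in `pⁿ C(X, ℤ_p)` is `pⁿ` times a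
locally constant function, since multiplication by `pⁿ` is injective.
-/

open Submodule

namespace LinearMap

variable {A : Type*} [CommRing A] (I : Ideal A)
  {N M Q : Type*} [AddCommGroup N] [Module A N] [AddCommGroup M] [Module A M]
  [AddCommGroup Q] [Module A Q]

abbrev reduceModPow (f : N →ₗ[A] M) (n : ℕ) :
    N ⧸ (I ^ n • ⊤ : Submodule A N) →ₗ[A] M ⧸ (I ^ n • ⊤ : Submodule A M) :=
  mapQ _ _ f (smul_top_le_comap_smul_top _ f)

lemma reduceModPow_comp (f : N →ₗ[A] M) (g : M →ₗ[A] Q) (n : ℕ) :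
    (g ∘ₗ f).reduceModPow I n = g.reduceModPow I n ∘ₗ f.reduceModPow I n :=
  mapQ_comp _ _ _ _ _ _ _

lemma factorPow_reduceModPow (f : N →ₗ[A] M) {m n : ℕ} (hmn : m ≤ n)
    (z : N ⧸ (I ^ n • ⊤ : Submodule A N)) :
    factorPow I M hmn (f.reduceModPow I n z) = f.reduceModPow I m (factorPow I N hmn z) :=
  Submodule.Quotient.induction_on _ z fun _ => rfl

variable {I}

theorem comp_injective_of_reduceModPow_surjective [IsHausdorff I Q] {ι : N →ₗ[A] M}
    (hι : ∀ n, Function.Surjective (ι.reduceModPow I n)) :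
    Function.Injective fun μ : M →ₗ[A] Q => μ ∘ₗ ι := by
  intro μ₁ μ₂ h
  have hred (n : ℕ) : μ₁.reduceModPow I n = μ₂.reduceModPow I n := by
    refine (cancel_right (hι n)).1 ?_
    simpa only [← reduceModPow_comp] using congrArg (reduceModPow I · n) h
  exact coe_injective <| IsHausdorff.funext I fun n x =>
    LinearMap.congr_fun (hred n) (Submodule.Quotient.mk x)

theorem comp_surjective_of_reduceModPow_bijective [IsAdicComplete I Q] {ι : N →ₗ[A] M}
    (hι : ∀ n, Function.Bijective (ι.reduceModPow I n)) :
    Function.Surjective fun μ : M →ₗ[A] Q => μ ∘ₗ ι := by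
  intro ν
  let e n := LinearEquiv.ofBijective _ (hι n)
  have he {m n : ℕ} (hmn : m ≤ n) (z : M ⧸ (I ^ n • ⊤ : Submodule A M)) :
      factorPow I N hmn ((e n).symm z) = (e m).symm (factorPow I M hmn z) := by
    rw [LinearEquiv.eq_symm_apply]
    conv_rhs => rw [← (e n).apply_symm_apply z]
    exact (factorPow_reduceModPow I ι hmn _).symm
  refine ⟨IsAdicComplete.lift I
    (fun n => ν.reduceModPow I n ∘ₗ (e n).symm.toLinearMap ∘ₗ mkQ (I ^ n • ⊤ : Submodule A M))
    ?compatible, ?restricts⟩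
  case compatible =>
    intro m n hmn
    ext x
    simp only [comp_apply, LinearEquiv.coe_coe, mkQ_apply]
    rw [factorPow_reduceModPow, he hmn]
    rfl
  case restricts =>
    refine coe_injective <| IsHausdorff.funext I fun n g => ?_
    rw [comp_apply, IsAdicComplete.mk_lift]
    simp only [comp_apply, LinearEquiv.coe_coe, mkQ_apply]
    have hg : (e n).symm (Submodule.Quotient.mk (ι g)) = Submodule.Quotient.mk g :=
      (LinearEquiv.symm_apply_eq _).2 rfl
    rw [hg]
    rfl

theorem comp_bijective_of_reduceModPow_bijective [IsAdicComplete I Q] {ι : N →ₗ[A] M}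
    (hι : ∀ n, Function.Bijective (ι.reduceModPow I n)) :
    Function.Bijective fun μ : M →ₗ[A] Q => μ ∘ₗ ι :=
  ⟨comp_injective_of_reduceModPow_surjective fun n => (hι n).2,
    comp_surjective_of_reduceModPow_bijective hι⟩

end LinearMap

lemma Submodule.mem_span_singleton_pow_smul_top {A M : Type*} [CommRing A] [AddCommGroup M]
    [Module A M] {a : A} {n : ℕ} {x : M} :
    x ∈ (Ideal.span {a} ^ n • ⊤ : Submodule A M) ↔ ∃ y, a ^ n • y = x := by
  simp [Ideal.span_singleton_pow, ideal_span_singleton_smul, mem_smul_pointwise_iff_exists]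

lemma IsAdicComplete.of_span_algebraMap {A R : Type*} [CommRing A] [CommRing R] [Algebra A R]
    {a : A} (h : IsAdicComplete (Ideal.span {algebraMap A R a}) R) :
    IsAdicComplete (Ideal.span {a}) R := by
  rwa [← IsAdicComplete.map_algebraMap_iff (S := R), Ideal.map_span, Set.image_singleton]

lemma ContinuousMap.exists_eq_smul_of_forall_dvd {X α : Type*} [TopologicalSpace X]
    [NonUnitalNormedRing α] [NormMulClass α] {c : α} (hc : c ≠ 0) (f : C(X, α))
    (hf : ∀ x, c ∣ f x) : ∃ g : C(X, α), f = c • g := by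
  choose g hg using hf
  have hcont : Continuous g :=
    ((antilipschitzWith_mul_left hc).isEmbedding (continuous_const_mul c)).continuous_iff.2 <| by
      simpa only [Function.comp_def, ← hg] using f.continuous
  exact ⟨⟨g, hcont⟩, ContinuousMap.ext hg⟩

lemma LocallyConstant.exists_eq_smul_of_toContinuousMap_eq_smul {X α : Type*}
    [TopologicalSpace X] [TopologicalSpace α] [Mul α] [ContinuousMul α] {c : α}
    (hc : IsLeftRegular c) (g : LocallyConstant X α) (h : C(X, α))
    (hgh : g.toContinuousMap = c • h) : ∃ g' : LocallyConstant X α, g = c • g' := by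
  have hgh' : ⇑g = c • ⇑h := congrArg DFunLike.coe hgh
  have hloc : IsLocallyConstant (c • ⇑h) := hgh' ▸ g.isLocallyConstant
  exact ⟨⟨h, hloc.desc (g := (c * ·)) _ hc⟩, LocallyConstant.ext (congrFun hgh')⟩

namespace PadicInt

variable {p : ℕ} [Fact p.Prime]

lemma isLocallyConstant_toZModPow (n : ℕ) :
    IsLocallyConstant (toZModPow n : ℤ_[p] → ZMod (p ^ n)) := by
  have hp : (0 : ℝ) < p := by exact_mod_cast (Fact.out : p.Prime).pos
  refine (IsLocallyConstant.iff_eventually_eq _).2 fun x => ?_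
  filter_upwards [Metric.closedBall_mem_nhds x (zpow_pos hp (-n))] with y hy
  rwa [← sub_eq_zero, ← map_sub, ← RingHom.mem_ker, ker_toZModPow,
    ← norm_le_pow_iff_mem_span_pow, ← dist_eq_norm]

/-- `x` modulo `p ^ n`, represented by a natural number below `p ^ n`. -/
noncomputable def truncation (n : ℕ) : LocallyConstant ℤ_[p] ℤ_[p] :=
  ⟨fun x => ((toZModPow n x).val : ℤ_[p]),
    (isLocallyConstant_toZModPow n).comp fun a => (a.val : ℤ_[p])⟩

lemma pow_dvd_sub_truncation (n : ℕ) (x : ℤ_[p]) : (p : ℤ_[p]) ^ n ∣ x - truncation n x := by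
  have : NeZero (p ^ n) := ⟨pow_ne_zero n (Fact.out : p.Prime).ne_zero⟩
  rw [← Ideal.mem_span_singleton, ← ker_toZModPow, RingHom.mem_ker, map_sub, sub_eq_zero]
  exact ((map_natCast (toZModPow n) _).trans (ZMod.natCast_zmod_val (toZModPow n x))).symm

variable {X : Type*} [TopologicalSpace X]

lemma exists_locallyConstant_sub_eq_pow_smul (f : C(X, ℤ_[p])) (n : ℕ) :
    ∃ (g : LocallyConstant X ℤ_[p]) (h : C(X, ℤ_[p])), f - g = (p : ℤ_[p]) ^ n • h :=
  ⟨(truncation n).comap f, ContinuousMap.exists_eq_smul_of_forall_dvd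
    (pow_ne_zero n prime_p.ne_zero) _ fun x => pow_dvd_sub_truncation n (f x)⟩

theorem reduceModPow_toContinuousMapLinearMap_bijective (n : ℕ) :
    Function.Bijective ((LocallyConstant.toContinuousMapLinearMap ℤ_[p] :
      LocallyConstant X ℤ_[p] →ₗ[ℤ_[p]] C(X, ℤ_[p])).reduceModPow
        (Ideal.span {(p : ℤ_[p])}) n) := by
  constructor
  · refine (injective_iff_map_eq_zero _).2 fun z hz => ?_
    induction z using Submodule.Quotient.induction_on with | _ g => ?_
    rw [LinearMap.reduceModPow, mapQ_apply, Submodule.Quotient.mk_eq_zero,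
      mem_span_singleton_pow_smul_top] at hz
    obtain ⟨h, hh⟩ := hz
    obtain ⟨g', rfl⟩ := LocallyConstant.exists_eq_smul_of_toContinuousMap_eq_smul
      (mul_right_injective₀ (pow_ne_zero n prime_p.ne_zero)) g h hh.symm
    exact (Submodule.Quotient.mk_eq_zero _).2 (mem_span_singleton_pow_smul_top.2 ⟨g', rfl⟩)
  · intro z
    induction z using Submodule.Quotient.induction_on with | _ f => ?_
    obtain ⟨g, h, hgh⟩ := exists_locallyConstant_sub_eq_pow_smul f n
    refine ⟨Submodule.Quotient.mk g, (Submodule.Quotient.eq _).2 ?_⟩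
    exact mem_span_singleton_pow_smul_top.2 ⟨-h, by rw [smul_neg, ← hgh, neg_sub]; rfl⟩

end PadicInt

theorem distribution_extends_uniquely_to_measure_general
    (p : ℕ) [Fact p.Prime]
    (X : Type*) [TopologicalSpace X]
    (R : Type*) [CommRing R] [Algebra ℤ_[p] R]
    [IsAdicComplete (Ideal.span {(p : R)}) R] :
    Function.Bijective
      (fun μ : C(X, ℤ_[p]) →ₗ[ℤ_[p]] R =>
        μ ∘ₗ (LocallyConstant.toContinuousMapLinearMap ℤ_[p] :
          LocallyConstant X ℤ_[p] →ₗ[ℤ_[p]] C(X, ℤ_[p]))) := by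
  have : IsAdicComplete (Ideal.span {(p : ℤ_[p])}) R :=
    .of_span_algebraMap (by rwa [map_natCast])
  exact LinearMap.comp_bijective_of_reduceModPow_bijective
    PadicInt.reduceModPow_toContinuousMapLinearMap_bijective

/-- Let `p` be a prime, `X` a profinite set, and `R` a
`p`-adically complete `ℤ_p`-algebra.  Restriction along the inclusion of locally
constant functions into continuous functions is a bijection from the set of
`ℤ_p`-linear maps `C(X, ℤ_p) → R` onto the set of `ℤ_p`-linear maps
`LC(X, ℤ_p) → R`: every `R`-valued distribution extends uniquely to a measure. -/
theorem distribution_extends_uniquely_to_measure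
    (p : ℕ) [Fact p.Prime]
    (X : Type*) [TopologicalSpace X] [CompactSpace X] [T2Space X]
    [TotallyDisconnectedSpace X]
    (R : Type*) [CommRing R] [Algebra ℤ_[p] R]
    [IsAdicComplete (Ideal.span {(p : R)}) R] :
    Function.Bijective
      (fun μ : C(X, ℤ_[p]) →ₗ[ℤ_[p]] R =>
        μ ∘ₗ (LocallyConstant.toContinuousMapLinearMap ℤ_[p] :
          LocallyConstant X ℤ_[p] →ₗ[ℤ_[p]] C(X, ℤ_[p]))) :=
  distribution_extends_uniquely_to_measure_general p X R
end

section
/- Let p be a prime and let R be a ℤ_p-algebra that is p-adically separated and on which multiplication by p is injective. If μ₁ and μ₂ are ℤ_p-linear maps C(ℤ_p, ℤ_p) → R whose moments agree, i.e. μ₁(z ↦ z^k) = μ₂(z ↦ z^k) for every natural number k, then μ₁ = μ₂. In other words, an R-valued measure on ℤ_p is characterized by its moments. -/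
/-!
Mahler's theorem approximates `f : C(ℤ_[p], ℤ_[p])` by a truncation `S` of its Mahler series with
`f - S = p ^ n • g` for a continuous `g : ℤ_[p] → ℤ_[p]`. Since `k! * (x choose k)` is the falling
factorial, `N! • S` is a polynomial function, so a linear map `ν` killing all moments satisfies
`N! • ν f = N! • p ^ n • ν g`. As `N!` is a unit times a power of `p` and there is no `p`-torsion,
`ν f ∈ p ^ n R` for every `n`, hence `ν f = 0` by `p`-adic separatedness.
-/

open Finset Polynomial
open scoped Nat

lemma LinearMap.map_eq_zero_of_mem_adjoin_singleton {R A M : Type*} [CommSemiring R] [Semiring A]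
    [Algebra R A] [AddCommMonoid M] [Module R M] (ν : A →ₗ[R] M) {x : A}
    (hν : ∀ k : ℕ, ν (x ^ k) = 0) {a : A} (ha : a ∈ Algebra.adjoin R {x}) : ν a = 0 := by
  rw [Algebra.adjoin_singleton_eq_range_aeval] at ha
  obtain ⟨P, rfl⟩ := ha
  simp [aeval_eq_sum_range, hν]

namespace PadicInt

variable {p : ℕ} [Fact p.Prime]

lemma factorial_smul_mahler (k : ℕ) :
    (k ! : ℤ_[p]) • mahler k = aeval (ContinuousMap.id ℤ_[p]) (descPochhammer ℤ_[p] k) := by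
  ext x
  rw [aeval_continuousMap_apply, ContinuousMap.smul_apply, mahler_apply, ContinuousMap.id_apply,
    ← descPochhammer_map (algebraMap ℤ ℤ_[p]), eval_map, ← aeval_def, aeval_eq_smeval,
    Ring.descPochhammer_eq_factorial_smul_choose, Nat.cast_smul_eq_nsmul]

lemma factorial_smul_sum_mahlerTerm_mem_adjoin (a : ℕ → ℤ_[p]) (N : ℕ) :
    (N ! : ℤ_[p]) • ∑ k ∈ range N, mahlerTerm (a k) k ∈
      Algebra.adjoin ℤ_[p] {ContinuousMap.id ℤ_[p]} := by
  rw [Finset.smul_sum]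
  refine Subalgebra.sum_mem _ fun k hk => ?_
  obtain ⟨d, hd⟩ := Nat.factorial_dvd_factorial (mem_range.mp hk).le
  have hterm : mahlerTerm (a k) k = a k • mahler k := by
    ext x; simp [mahlerTerm_apply, mul_comm]
  rw [hterm, hd, Nat.cast_mul, smul_smul, mul_rotate, ← smul_smul, factorial_smul_mahler]
  exact Subalgebra.smul_mem _ (aeval_mem_adjoin_singleton _ _) _

lemma exists_eq_pow_smul_of_norm_le {h : C(ℤ_[p], ℤ_[p])} {n : ℕ}
    (hh : ‖h‖ ≤ (p : ℝ) ^ (-n : ℤ)) : ∃ g : C(ℤ_[p], ℤ_[p]), h = (p : ℤ_[p]) ^ n • g := by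
  have hpn : (p : ℚ_[p]) ^ n ≠ 0 := pow_ne_zero _ (NeZero.ne _)
  have hle : ∀ x, ‖(h x : ℚ_[p]) / (p : ℚ_[p]) ^ n‖ ≤ 1 := fun x => by
    rw [norm_div, norm_pow, Padic.norm_p, div_le_one (by simp [(Fact.out : p.Prime).pos]), inv_pow,
      ← zpow_natCast, ← zpow_neg]
    exact (h.norm_coe_le_norm x).trans hh
  refine ⟨⟨fun x => ⟨_, hle x⟩, ?_⟩, ?_⟩
  · exact ((continuous_subtype_val.comp h.continuous).div_const _).subtype_mk _
  · ext x
    apply Subtype.ext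
    simp only [ContinuousMap.coe_smul, Pi.smul_apply, smul_eq_mul, coe_mul, coe_pow, coe_natCast]
    exact (mul_div_cancel₀ _ hpn).symm

lemma exists_factorial_smul_sub_pow_smul_mem_adjoin (f : C(ℤ_[p], ℤ_[p])) (n : ℕ) :
    ∃ (N : ℕ) (g : C(ℤ_[p], ℤ_[p])),
      (N ! : ℤ_[p]) • (f - (p : ℤ_[p]) ^ n • g) ∈ Algebra.adjoin ℤ_[p] {ContinuousMap.id ℤ_[p]} := by
  have hε : (0 : ℝ) < (p : ℝ) ^ (-n : ℤ) := zpow_pos (mod_cast (Fact.out : p.Prime).pos) _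
  obtain ⟨N, hN⟩ := ((hasSum_mahler f).tendsto_sum_nat.eventually
    (Metric.closedBall_mem_nhds f hε)).exists
  obtain ⟨g, hg⟩ := exists_eq_pow_smul_of_norm_le (by rwa [← dist_eq_norm, dist_comm])
  refine ⟨N, g, ?_⟩
  rw [← hg, sub_sub_cancel]
  exact factorial_smul_sum_mahlerTerm_mem_adjoin _ N

section Module

variable {M : Type*} [AddCommGroup M] [Module ℤ_[p] M]

lemma isSMulRegular_of_ne_zero (hp : IsSMulRegular M (p : ℤ_[p])) {c : ℤ_[p]} (hc : c ≠ 0) :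
    IsSMulRegular M c := by
  rw [unitCoeff_spec hc]
  exact ((unitCoeff hc).isUnit.isSMulRegular M).mul (hp.pow _)

lemma map_mem_pow_smul_top (hp : IsSMulRegular M (p : ℤ_[p])) {ν : C(ℤ_[p], ℤ_[p]) →ₗ[ℤ_[p]] M}
    (hν : ∀ k : ℕ, ν (ContinuousMap.id ℤ_[p] ^ k) = 0) (f : C(ℤ_[p], ℤ_[p])) (n : ℕ) :
    ν f ∈ (Ideal.span {(p : ℤ_[p])} ^ n • ⊤ : Submodule ℤ_[p] M) := by
  obtain ⟨N, g, hmem⟩ := exists_factorial_smul_sub_pow_smul_mem_adjoin f n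
  have hdiv : ν f = (p : ℤ_[p]) ^ n • ν g := by
    refine sub_eq_zero.mp
      (isSMulRegular_of_ne_zero hp (Nat.cast_ne_zero.mpr N.factorial_ne_zero) ?_)
    simpa [smul_sub] using ν.map_eq_zero_of_mem_adjoin_singleton hν hmem
  rw [hdiv, Ideal.span_singleton_pow]
  exact Submodule.smul_mem_smul (Ideal.mem_span_singleton_self _) Submodule.mem_top

theorem linearMap_eq_zero_of_map_pow_id [IsHausdorff (Ideal.span {(p : ℤ_[p])}) M]
    (hp : IsSMulRegular M (p : ℤ_[p])) {ν : C(ℤ_[p], ℤ_[p]) →ₗ[ℤ_[p]] M}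
    (hν : ∀ k : ℕ, ν (ContinuousMap.id ℤ_[p] ^ k) = 0) : ν = 0 :=
  LinearMap.ext fun f => IsHausdorff.haus ‹_› (ν f) fun n =>
    SModEq.zero.mpr (map_mem_pow_smul_top hp hν f n)

end Module

end PadicInt

/-- Let `p` be a prime and `R` a `ℤ_p`-algebra that is
`p`-adically separated and on which multiplication by `p` is injective.  If two
`ℤ_p`-linear maps `μ₁, μ₂ : C(ℤ_p, ℤ_p) → R` have the same moments, i.e.
`μ₁ (z ↦ z^k) = μ₂ (z ↦ z^k)` for all `k : ℕ`, then `μ₁ = μ₂`: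
an `R`-valued measure on `ℤ_p` is characterized by its moments. -/
theorem measure_characterized_by_moments
    (p : ℕ) [Fact p.Prime]
    (R : Type*) [CommRing R] [Algebra ℤ_[p] R]
    [IsHausdorff (Ideal.span {(p : R)}) R]
    (hp : Function.Injective fun r : R => (p : R) * r)
    (μ₁ μ₂ : C(ℤ_[p], ℤ_[p]) →ₗ[ℤ_[p]] R)
    (h : ∀ k : ℕ, μ₁ (ContinuousMap.id ℤ_[p] ^ k) = μ₂ (ContinuousMap.id ℤ_[p] ^ k)) :
    μ₁ = μ₂ := by
  have hpR : IsSMulRegular R (p : ℤ_[p]) := by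
    intro x y hxy
    exact hp (by simpa only [Nat.cast_smul_eq_nsmul, nsmul_eq_mul] using hxy)
  have : IsHausdorff (Ideal.span {(p : ℤ_[p])}) R := by
    rw [← IsHausdorff.map_algebraMap_iff (S := R), Ideal.map_span, Set.image_singleton,
      map_natCast]
    infer_instance
  refine sub_eq_zero.mp (PadicInt.linearMap_eq_zero_of_map_pow_id hpR fun k => ?_)
  rw [LinearMap.sub_apply, h, sub_self]
end

section
/- Let p be a prime and let R be a ℤ_p-algebra that is p-adically separated and on which multiplication by p is injective. If μ₁ and μ₂ are ℤ_p-linear maps C(ℤ_p × ℤ_p, ℤ_p) → R such that μ₁((x,y) ↦ x^k·y^r) = μ₂((x,y) ↦ x^k·y^r) for all natural numbers k and r, then μ₁ = μ₂. In other words, an R-valued measure on ℤ_p × ℤ_p is characterized by its two-variable moments. -/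
/-!
Put `ν = μ₁ - μ₂`. The monomials span the polynomial functions, which contain
`k! r! · C(x, k) C(y, r)`; as `R` has no `p`-torsion (hence no `ℤ`-torsion), `ν` kills every
product of binomial functions `C(x, k) C(y, r)`. By Mahler's theorem, applied to the curried
function and then to each coefficient, these products span a dense submodule of
`C(ℤ_p × ℤ_p, ℤ_p)`, so every `f` is congruent modulo `p^n` to an element of the span; hence
`ν f ∈ p^n R` for all `n` and `ν f = 0` by `p`-adic separatedness.
-/

open ContinuousMap PadicInt Submodule
open scoped Nat

theorem Algebra.adjoin_pair_le_ker {R A M : Type*} [CommSemiring R] [CommSemiring A]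
    [Algebra R A] [AddCommMonoid M] [Module R M] (ν : A →ₗ[R] M) {a b : A}
    (h : ∀ k r : ℕ, ν (a ^ k * b ^ r) = 0) :
    Subalgebra.toSubmodule (Algebra.adjoin R {a, b}) ≤ LinearMap.ker ν := by
  rw [Algebra.adjoin_eq_span, span_le]
  rintro _ hx
  obtain ⟨k, r, rfl⟩ := (Submonoid.mem_closure_pair _ _ _).1 hx
  exact h k r

/-- Multiplication by `c ≠ 0` is a closed embedding of the compact ring `R`, so dividing by `c`
preserves continuity. -/
theorem ContinuousMap.exists_eq_smul_of_forall_dvd_s5 {X R : Type*} [TopologicalSpace X]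
    [CommRing R] [NoZeroDivisors R] [TopologicalSpace R] [IsTopologicalRing R] [CompactSpace R]
    [T2Space R] {c : R} (hc : c ≠ 0) {g : C(X, R)} (hg : ∀ x, c ∣ g x) :
    ∃ h : C(X, R), g = c • h := by
  choose h hh using hg
  have hemb : Topology.IsEmbedding (c * · : R → R) :=
    ((continuous_const_mul c).isClosedEmbedding (mul_right_injective₀ hc)).isEmbedding
  have hcont : Continuous h :=
    hemb.continuous_iff.2 (by convert g.continuous; ext x; exact (hh x).symm)
  exact ⟨⟨h, hcont⟩, by ext x; exact hh x⟩

namespace PadicInt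

variable {p : ℕ} [Fact p.Prime]

theorem isSMulRegular_of_ne_zero_s5 {M : Type*} [AddCommGroup M] [Module ℤ_[p] M]
    (hp : IsSMulRegular M (p : ℤ_[p])) {x : ℤ_[p]} (hx : x ≠ 0) : IsSMulRegular M x := by
  rw [unitCoeff_spec hx]
  exact (Units.isSMulRegular M _).mul (hp.pow _)

theorem exists_mem_add_pow_smul_of_dense {X : Type*} [TopologicalSpace X] [CompactSpace X]
    {D : Submodule ℤ_[p] C(X, ℤ_[p])} (hD : Dense (D : Set C(X, ℤ_[p]))) (f : C(X, ℤ_[p]))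
    (n : ℕ) : ∃ g ∈ D, ∃ h : C(X, ℤ_[p]), f = g + (p : ℤ_[p]) ^ n • h := by
  obtain ⟨g, hgD, hfg⟩ := hD.exists_dist_lt f (ε := (p : ℝ) ^ (-n : ℤ))
    (zpow_pos (by exact_mod_cast (Fact.out : p.Prime).pos) _)
  have hdvd : ∀ x, (p : ℤ_[p]) ^ n ∣ (f - g) x := fun x => by
    rw [← Ideal.mem_span_singleton, ← norm_le_pow_iff_mem_span_pow]
    exact ((f - g).norm_coe_le_norm x).trans (dist_eq_norm f g ▸ hfg).le
  have hp : (p : ℤ_[p]) ≠ 0 := by exact_mod_cast (Fact.out : p.Prime).ne_zero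
  obtain ⟨h, hh⟩ := exists_eq_smul_of_forall_dvd_s5 (pow_ne_zero n hp) hdvd
  exact ⟨g, hgD, h, by rw [← hh, add_sub_cancel]⟩

theorem linearMap_eq_zero_of_dense_ker {X M : Type*} [TopologicalSpace X] [CompactSpace X]
    [AddCommGroup M] [Module ℤ_[p] M] [IsHausdorff (Ideal.span {(p : ℤ_[p])}) M]
    {ν : C(X, ℤ_[p]) →ₗ[ℤ_[p]] M} (hν : Dense (LinearMap.ker ν : Set C(X, ℤ_[p]))) : ν = 0 := by
  ext f
  refine IsHausdorff.haus ‹_› _ fun n => SModEq.zero.2 ?_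
  obtain ⟨g, hg, h, rfl⟩ := exists_mem_add_pow_smul_of_dense hν f n
  rw [map_add, LinearMap.mem_ker.1 hg, zero_add, map_smul]
  exact smul_mem_smul (Ideal.pow_mem_pow (Ideal.mem_span_singleton_self _) n) mem_top

theorem mahlerTerm_eq_smul (a : ℤ_[p]) (k : ℕ) : mahlerTerm a k = a • mahler k := by
  ext x
  simp [mahlerTerm_apply, mul_comm]

theorem dense_span_mahler :
    Dense (span ℤ_[p] (Set.range (mahler (p := p))) : Set C(ℤ_[p], ℤ_[p])) := by
  intro f
  refine mem_closure_of_tendsto (hasSum_mahler f).tendsto_sum_nat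
    (Filter.Eventually.of_forall fun n => sum_mem fun k _ => ?_)
  rw [mahlerTerm_eq_smul]
  exact smul_mem _ _ (subset_span ⟨k, rfl⟩)

noncomputable def mahler₂ (k r : ℕ) : C(ℤ_[p] × ℤ_[p], ℤ_[p]) :=
  (mahler k).comp .fst * (mahler r).comp .snd

theorem dense_span_mahler₂ :
    Dense (span ℤ_[p] (Set.range (Function.uncurry (mahler₂ (p := p)))) :
      Set C(ℤ_[p] × ℤ_[p], ℤ_[p])) := by
  set D₂ := span ℤ_[p] (Set.range (Function.uncurry (mahler₂ (p := p))))
  -- the external product `(a, b) ↦ ((x, y) ↦ a x * b y)`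
  let T : C(ℤ_[p], ℤ_[p]) →ₗ[ℤ_[p]] C(ℤ_[p], ℤ_[p]) →ₗ[ℤ_[p]] C(ℤ_[p] × ℤ_[p], ℤ_[p]) :=
    (LinearMap.mul ℤ_[p] _).compl₁₂ (compRightAlgHom ℤ_[p] ℤ_[p] .fst).toLinearMap
      (compRightAlgHom ℤ_[p] ℤ_[p] .snd).toLinearMap
  have hT : Continuous fun q : C(ℤ_[p], ℤ_[p]) × C(ℤ_[p], ℤ_[p]) => T q.1 q.2 :=
    ((continuous_precomp _).comp continuous_fst).mul ((continuous_precomp _).comp continuous_snd)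
  have hTD : ∀ a ∈ span ℤ_[p] (Set.range (mahler (p := p))),
      ∀ b ∈ span ℤ_[p] (Set.range (mahler (p := p))), T a b ∈ D₂ := by
    intro a ha b hb
    have := apply_mem_map₂ T ha hb
    rwa [map₂_span_span, Set.image2_range] at this
  have hTD₂ : ∀ a b, T a b ∈ closure (D₂ : Set C(ℤ_[p] × ℤ_[p], ℤ_[p])) := fun a b =>
    map_mem_closure₂ (f := fun a b => T a b) hT (dense_span_mahler a) (dense_span_mahler b) hTD
  have huncurry (s : Finset ℕ) (a : ℕ → C(ℤ_[p], ℤ_[p])) :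
      (∑ k ∈ s, mahlerTerm (a k) k).uncurry = ∑ k ∈ s, T (mahler k) (a k) := by
    ext z
    simp [T, mahlerTerm_apply, Function.uncurry]
  intro f
  have hsum := (continuous_uncurry.tendsto f.curry).comp (hasSum_mahler f.curry).tendsto_sum_nat
  refine (isClosed_closure.mem_of_tendsto hsum (Filter.Eventually.of_forall fun n => ?_) :)
  rw [Function.comp_apply, huncurry, ← D₂.topologicalClosure_coe]
  exact D₂.topologicalClosure.sum_mem fun k _ => hTD₂ _ _

theorem factorial_smul_mahler_comp_mem_adjoin {X : Type*} [TopologicalSpace X]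
    (g : C(X, ℤ_[p])) (k : ℕ) : k ! • (mahler k).comp g ∈ Algebra.adjoin ℤ_[p] {g} := by
  convert Polynomial.aeval_mem_adjoin_singleton ℤ_[p] g (p := descPochhammer ℤ_[p] k)
  ext x
  rw [Polynomial.aeval_continuousMap_apply, ← descPochhammer_map (algebraMap ℤ ℤ_[p]),
    Polynomial.eval_map_algebraMap, Polynomial.aeval_eq_smeval,
    Ring.descPochhammer_eq_factorial_smul_choose]
  rfl

theorem mahler₂_mem_ker {M : Type*} [AddCommGroup M] [Module ℤ_[p] M]
    (hp : IsSMulRegular M (p : ℤ_[p])) (ν : C(ℤ_[p] × ℤ_[p], ℤ_[p]) →ₗ[ℤ_[p]] M)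
    (hν : ∀ k r : ℕ, ν ((ContinuousMap.fst : C(ℤ_[p] × ℤ_[p], ℤ_[p])) ^ k * .snd ^ r) = 0)
    (k r : ℕ) : mahler₂ k r ∈ LinearMap.ker ν := by
  have hmem : ((k ! * r ! : ℕ) : ℤ_[p]) • mahler₂ k r ∈
      Algebra.adjoin ℤ_[p] {(ContinuousMap.fst : C(ℤ_[p] × ℤ_[p], ℤ_[p])), .snd} := by
    rw [Nat.cast_smul_eq_nsmul, mahler₂, ← smul_mul_smul_comm]
    exact mul_mem
      (Algebra.adjoin_mono (Set.singleton_subset_iff.2 (Set.mem_insert _ _))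
        (factorial_smul_mahler_comp_mem_adjoin _ k))
      (Algebra.adjoin_mono (Set.subset_insert _ _) (factorial_smul_mahler_comp_mem_adjoin _ r))
  have hreg := isSMulRegular_of_ne_zero_s5 hp (x := ((k ! * r ! : ℕ) : ℤ_[p]))
    (by exact_mod_cast (mul_pos k.factorial_pos r.factorial_pos).ne')
  refine isSMulRegular_iff_right_eq_zero_of_smul.1 hreg _ ?_
  rw [← map_smul]
  exact Algebra.adjoin_pair_le_ker ν hν hmem

end PadicInt

/-- Let `p` be a prime and `R` a `ℤ_p`-algebra that is
`p`-adically separated and on which multiplication by `p` is injective.  If two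
`ℤ_p`-linear maps `μ₁, μ₂ : C(ℤ_p × ℤ_p, ℤ_p) → R` agree on all monomials
`(x, y) ↦ x^k * y^r`, then `μ₁ = μ₂`: an `R`-valued measure on `ℤ_p × ℤ_p` is
characterized by its two-variable moments. -/
theorem two_variable_measure_characterized_by_moments
    (p : ℕ) [Fact p.Prime]
    (R : Type*) [CommRing R] [Algebra ℤ_[p] R]
    [IsHausdorff (Ideal.span {(p : R)}) R]
    (hp : Function.Injective fun r : R => (p : R) * r)
    (μ₁ μ₂ : C(ℤ_[p] × ℤ_[p], ℤ_[p]) →ₗ[ℤ_[p]] R)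
    (h : ∀ k r : ℕ,
      μ₁ ((ContinuousMap.fst : C(ℤ_[p] × ℤ_[p], ℤ_[p])) ^ k *
          (ContinuousMap.snd : C(ℤ_[p] × ℤ_[p], ℤ_[p])) ^ r) =
      μ₂ ((ContinuousMap.fst : C(ℤ_[p] × ℤ_[p], ℤ_[p])) ^ k *
          (ContinuousMap.snd : C(ℤ_[p] × ℤ_[p], ℤ_[p])) ^ r)) :
    μ₁ = μ₂ := by
  have hreg : IsSMulRegular R (p : ℤ_[p]) := by
    rw [← isSMulRegular_algebraMap_iff R, map_natCast]
    exact hp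
  have : IsHausdorff (Ideal.span {(p : ℤ_[p])}) R := by
    rw [← IsHausdorff.map_algebraMap_iff (S := R), Ideal.map_span, Set.image_singleton,
      map_natCast]
    infer_instance
  rw [← sub_eq_zero]
  refine linearMap_eq_zero_of_dense_ker (dense_span_mahler₂.mono (span_le.2 ?_))
  rintro _ ⟨⟨k, r⟩, rfl⟩
  exact mahler₂_mem_ker hreg _ (fun k r => by rw [LinearMap.sub_apply, h, sub_self]) k r
end
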